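/- arXiv:1812.10454 — 9 statements merged into one kernel-verified Lean document; each statement's English description precedes it below -/
import Mathlib

section
/- Let X and Y be finite-dimensional real vector spaces and let α, β : X → Y be linear maps. If β(ker α) ∩ im α = {0} in Y, then for all but finitely many scalars ε ∈ ℝ one has ker(α + εβ) = ker α ∩ ker β. (This is the kernel part of the Perturbation Lemma: a generic linear combination of α and β has kernel equal to ker α ∩ ker β.) -/
/-!
On `W = β⁻¹(im α)` the hypothesis says `ker α ∩ W ⊆ ker β`, so `β = g ∘ α` on `W` for some
endomorphism `g` of `Y`. For `ε ≠ 0` every `x ∈ ker (α + εβ)` lies in `W`, and then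
`(1 + εg)(α x) = α x + ε β x = 0`. Hence `ker (α + εβ) = ker α ∩ ker β` unless `ε = 0` or
`-ε⁻¹` is one of the finitely many eigenvalues of `g`.
-/

open LinearMap Submodule

theorem LinearMap.exists_comp_eq_of_ker_le {K V W U : Type*} [DivisionRing K]
    [AddCommGroup V] [Module K V] [AddCommGroup W] [Module K W] [AddCommGroup U] [Module K U]
    (f : V →ₗ[K] W) (g : V →ₗ[K] U) (hle : ker f ≤ ker g) :
    ∃ h : W →ₗ[K] U, h ∘ₗ f = g := by
  obtain ⟨h, hh⟩ := exists_extend ((ker f).liftQ g hle ∘ₗ f.quotKerEquivRange.symm.toLinearMap)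
  refine ⟨h, ext fun x ↦ ?_⟩
  simpa [quotKerEquivRange_symm_apply_image] using congr($hh ⟨f x, mem_range_self f x⟩)

theorem Module.End.finite_setOf_not_injective_one_add_smul {K V : Type*} [Field K]
    [AddCommGroup V] [Module K V] [FiniteDimensional K V] (g : Module.End K V) :
    {ε : K | ¬ Function.Injective ((1 : Module.End K V) + ε • g)}.Finite := by
  refine (g.finite_hasEigenvalue.image fun μ ↦ -μ⁻¹).subset fun ε hε ↦ ?_
  have hε0 : ε ≠ 0 := by
    rintro rfl
    exact hε (by rw [zero_smul, add_zero]; exact Function.injective_id)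
  obtain ⟨y, hy, hy0⟩ := exists_mem_ne_zero_of_ne_bot fun hk ↦ hε (ker_eq_bot.1 hk)
  have heig : g y = (-ε⁻¹) • y := by
    have hy' : y + ε • g y = 0 := by simpa using hy
    rw [neg_smul, eq_neg_iff_add_eq_zero, ← smul_right_inj hε0, smul_add, smul_inv_smul₀ hε0,
      add_comm, hy', smul_zero]
  exact ⟨-ε⁻¹, hasEigenvalue_of_hasEigenvector ⟨mem_eigenspace_iff.2 heig, hy0⟩, by simp⟩

theorem LinearMap.ker_add_smul_eq_inf_ker {K X Y : Type*} [Field K]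
    [AddCommGroup X] [Module K X] [AddCommGroup Y] [Module K Y]
    (α β : X →ₗ[K] Y) (g : Module.End K Y) (hg : ∀ x, β x ∈ range α → g (α x) = β x)
    {ε : K} (hε : ε ≠ 0) (hinj : Function.Injective ((1 : Module.End K Y) + ε • g)) :
    ker (α + ε • β) = ker α ⊓ ker β := by
  refine le_antisymm (fun x hx ↦ ?_) fun x ⟨hα, hβ⟩ ↦ by simp_all
  have hsum : α x + ε • β x = 0 := hx
  have hβr : β x ∈ range α := by
    refine ⟨-(ε⁻¹ • x), ?_⟩
    rw [map_neg, map_smul, neg_eq_iff_add_eq_zero, ← smul_right_inj hε, smul_add,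
      smul_inv_smul₀ hε, hsum, smul_zero]
  have hα : α x = 0 := hinj (by simpa [hg x hβr] using hsum)
  have hβ : β x = 0 := by simpa [hα, hε] using hsum
  exact ⟨hα, hβ⟩

theorem perturbation_lemma_kernel_general
    (X Y : Type*) [AddCommGroup X] [Module ℝ X]
    [AddCommGroup Y] [Module ℝ Y] [FiniteDimensional ℝ Y]
    (α β : X →ₗ[ℝ] Y)
    (h : (LinearMap.ker α).map β ⊓ LinearMap.range α = ⊥) :
    {ε : ℝ |
      LinearMap.ker (α + ε • β) ≠ LinearMap.ker α ⊓ LinearMap.ker β}.Finite := by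
  set W := (range α).comap β
  have hker : ker (α ∘ₗ W.subtype) ≤ ker (β ∘ₗ W.subtype) := fun x hx ↦ by
    have : β x ∈ (ker α).map β ⊓ range α := ⟨mem_map_of_mem hx, x.2⟩
    rwa [h, mem_bot] at this
  obtain ⟨g, hg⟩ := exists_comp_eq_of_ker_le _ _ hker
  refine ((Module.End.finite_setOf_not_injective_one_add_smul g).insert 0).subset fun ε hε ↦ ?_
  by_contra hgood
  simp only [Set.mem_insert_iff, Set.mem_ofPred_eq, not_or, not_not] at hgood
  exact hε (ker_add_smul_eq_inf_ker α β g (fun x hx ↦ congr($hg ⟨x, hx⟩)) hgood.1 hgood.2)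

/-- **Perturbation Lemma, kernel part.**
If `β (ker α) ⊓ range α = ⊥`, then for all but finitely many `ε : ℝ`,
`ker (α + ε • β) = ker α ⊓ ker β`. -/
theorem perturbation_lemma_kernel
    (X Y : Type*) [AddCommGroup X] [Module ℝ X] [FiniteDimensional ℝ X]
    [AddCommGroup Y] [Module ℝ Y] [FiniteDimensional ℝ Y]
    (α β : X →ₗ[ℝ] Y)
    (h : (LinearMap.ker α).map β ⊓ LinearMap.range α = ⊥) :
    {ε : ℝ |
      LinearMap.ker (α + ε • β) ≠ LinearMap.ker α ⊓ LinearMap.ker β}.Finite :=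
  perturbation_lemma_kernel_general X Y α β h
end

section
/- Let X and Y be finite-dimensional real vector spaces and let α, β : X → Y be linear maps. If β⁻¹(im α) + ker α = X, then for all but finitely many scalars ε ∈ ℝ one has im(α + εβ) = im α + im β. (This is the image part of the Perturbation Lemma: a generic linear combination of α and β has image equal to im α + im β.) -/
/-!
Restricted to `W = β⁻¹(im α)`, both `α` and `β` map into `im α`, and `α` maps `W` onto `im α`
because `W + ker α = X`. Composing with a right inverse `s` of `α|W` turns `α + εβ` into the
endomorphism `1 + ε • (β ∘ s)` of `im α`, which is invertible unless `-ε⁻¹` lies in the finite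
spectrum of `β ∘ s`. So for all but finitely many `ε` the image of `α + εβ` contains `im α`;
for `ε ≠ 0` it also contains `β(ker α) = (α + εβ)(ε⁻¹ • ker α)`, hence all of `im β`.
-/

namespace Module.End

variable {K V : Type*} [Field K] [AddCommGroup V] [Module K V]

theorem finite_setOf_not_isUnit_one_add_smul [FiniteDimensional K V] (T : End K V) :
    {ε : K | ¬IsUnit (1 + ε • T)}.Finite := by
  refine ((finite_spectrum T).preimage (neg_injective.comp inv_injective).injOn).subset ?_
  intro ε hε
  have hε0 : ε ≠ 0 := by
    rintro rfl
    simp at hε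
  refine spectrum.mem_iff.mpr fun hunit ↦ hε ?_
  have hscale : 1 + ε • T =
      Units.mk0 (-ε) (neg_ne_zero.mpr hε0) • (algebraMap K (End K V) (-ε⁻¹) - T) := by
    rw [Units.smul_mk0, Algebra.algebraMap_eq_smul_one, smul_sub, smul_smul]
    simp [hε0]
  rwa [hscale, isUnit_smul_iff]

end Module.End

namespace LinearMap

variable {K V W : Type*} [Field K] [AddCommGroup V] [Module K V] [AddCommGroup W] [Module K W]

theorem finite_setOf_not_surjective_add_smul [FiniteDimensional K W] (f g : V →ₗ[K] W)
    (hf : Function.Surjective f) : {ε : K | ¬Function.Surjective (f + ε • g)}.Finite := by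
  obtain ⟨s, hs⟩ := f.exists_rightInverse_of_surjective (range_eq_top_of_surjective f hf)
  refine (Module.End.finite_setOf_not_isUnit_one_add_smul (g ∘ₗ s)).subset
    fun ε hε hunit ↦ hε ?_
  have hcomp : (f + ε • g) ∘ₗ s = 1 + ε • (g ∘ₗ s) := by
    rw [add_comp, smul_comp, hs]; rfl
  have hsurj : Function.Surjective ((f + ε • g) ∘ₗ s) :=
    hcomp ▸ ((Module.End.isUnit_iff _).mp hunit).surjective
  exact Function.Surjective.of_comp (g := s) hsurj

theorem surjective_restrict_range_iff (f : V →ₗ[K] W) (p : Submodule K V) :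
    Function.Surjective (f.restrict (p := p) fun x _ ↦ mem_range_self f x) ↔
      Codisjoint p (ker f) := by
  rw [← range_eq_top, range_restrict, Submodule.comap_subtype_eq_top,
    ← Submodule.map_eq_range_iff, le_antisymm_iff, and_iff_right map_le_range]

theorem le_range_of_surjective_restrict {f : V →ₗ[K] W} {p : Submodule K V} {q : Submodule K W}
    (hf : ∀ x ∈ p, f x ∈ q) (h : Function.Surjective (f.restrict hf)) : q ≤ range f :=
  fun y hy ↦ let ⟨x, hx⟩ := h ⟨y, hy⟩; ⟨x, congrArg Subtype.val hx⟩

theorem range_add_smul_le_sup (α β : V →ₗ[K] W) (ε : K) :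
    range (α + ε • β) ≤ range α ⊔ range β :=
  (range_add_le _ _).trans (sup_le_sup_left (range_smul_le_range _ _) _)

theorem range_add_smul_eq_sup {α β : V →ₗ[K] W} {ε : K} (hε : ε ≠ 0)
    (h : Codisjoint ((range α).comap β) (ker α)) (hα : range α ≤ range (α + ε • β)) :
    range (α + ε • β) = range α ⊔ range β := by
  refine (range_add_smul_le_sup α β ε).antisymm (sup_le hα ?_)
  rintro _ ⟨x, rfl⟩
  obtain ⟨u, hu, k, hk, rfl⟩ := Submodule.mem_sup.mp (h.eq_top ▸ Submodule.mem_top : x ∈ _)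
  have hβk : β k = (α + ε • β) (ε⁻¹ • k) := by
    simp [mem_ker.mp hk, smul_smul, hε]
  rw [map_add, hβk]
  exact add_mem (hα hu) (mem_range_self _ _)

end LinearMap

open LinearMap in
theorem perturbation_lemma_image_general
    (X Y : Type*) [AddCommGroup X] [Module ℝ X]
    [AddCommGroup Y] [Module ℝ Y] [FiniteDimensional ℝ Y]
    (α β : X →ₗ[ℝ] Y)
    (h : (LinearMap.range α).comap β ⊔ LinearMap.ker α = ⊤) :
    {ε : ℝ |
      LinearMap.range (α + ε • β) ≠ LinearMap.range α ⊔ LinearMap.range β}.Finite := by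
  have hcod : Codisjoint ((range α).comap β) (ker α) := codisjoint_iff.mpr h
  have hβ : ∀ x ∈ (range α).comap β, β x ∈ range α := fun _ hx ↦ hx
  refine ((finite_setOf_not_surjective_add_smul _ (β.restrict hβ)
    ((surjective_restrict_range_iff α _).mpr hcod)).union (Set.finite_singleton 0)).subset ?_
  intro ε hε
  by_contra hgeneric
  obtain ⟨hε0, hsurj⟩ : ε ≠ 0 ∧ Function.Surjective _ := by simpa using hgeneric
  exact hε <| range_add_smul_eq_sup hε0 hcod <|
    le_range_of_surjective_restrict (f := α + ε • β)
      (fun x hx ↦ add_mem (mem_range_self α x) (Submodule.smul_mem _ ε hx)) hsurj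

/-- **Perturbation Lemma, image part.**
If `β⁻¹ (range α) ⊔ ker α = ⊤`, then for all but finitely many `ε : ℝ`,
`range (α + ε • β) = range α ⊔ range β`. -/
theorem perturbation_lemma_image
    (X Y : Type*) [AddCommGroup X] [Module ℝ X] [FiniteDimensional ℝ X]
    [AddCommGroup Y] [Module ℝ Y] [FiniteDimensional ℝ Y]
    (α β : X →ₗ[ℝ] Y)
    (h : (LinearMap.range α).comap β ⊔ LinearMap.ker α = ⊤) :
    {ε : ℝ |
      LinearMap.range (α + ε • β) ≠ LinearMap.range α ⊔ LinearMap.range β}.Finite :=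
  perturbation_lemma_image_general X Y α β h
end

section
/- Let X and Y be finite-dimensional real vector spaces, let α, β : X → Y be linear maps, and let α*, β* : Y* → X* denote the dual (transpose) maps between the dual spaces. Then the following two conditions are equivalent: (i) β*(ker α*) ∩ im α* = {0} in X*; (ii) β⁻¹(im α) + ker α = X. (This is the equivalence of the two transversality conditions asserted in part (2) of the Perturbation Lemma.) -/
lemma map_dualMap_dualAnnihilator
    {X Y : Type*} [AddCommGroup X] [Module ℝ X] [FiniteDimensional ℝ X]
    [AddCommGroup Y] [Module ℝ Y] [FiniteDimensional ℝ Y]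
    (f : X →ₗ[ℝ] Y) (W : Submodule ℝ Y) :
    W.dualAnnihilator.map f.dualMap = (W.comap f).dualAnnihilator := by
  have h1 : W.comap f = LinearMap.ker (W.mkQ ∘ₗ f) := by
    rw [LinearMap.ker_comp, Submodule.ker_mkQ]
  rw [h1, ← LinearMap.range_dualMap_eq_dualAnnihilator_ker,
    ← LinearMap.dualMap_comp_dualMap, LinearMap.range_comp,
    LinearMap.range_dualMap_eq_dualAnnihilator_ker, Submodule.ker_mkQ]

/-- Equivalence of the two transversality conditions in part (2) of the
Perturbation Lemma: `β* (ker α*) ⊓ range α* = ⊥` in the dual space `X*`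
if and only if `β⁻¹ (range α) ⊔ ker α = ⊤` in `X`. -/
theorem dual_transversality_equivalence
    (X Y : Type*) [AddCommGroup X] [Module ℝ X] [FiniteDimensional ℝ X]
    [AddCommGroup Y] [Module ℝ Y] [FiniteDimensional ℝ Y]
    (α β : X →ₗ[ℝ] Y) :
    (LinearMap.ker α.dualMap).map β.dualMap ⊓ LinearMap.range α.dualMap = ⊥ ↔
      (LinearMap.range α).comap β ⊔ LinearMap.ker α = ⊤ := by
  rw [LinearMap.ker_dualMap_eq_dualAnnihilator_range,
    LinearMap.range_dualMap_eq_dualAnnihilator_ker,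
    map_dualMap_dualAnnihilator, ← Submodule.dualAnnihilator_sup_eq,
    ← Submodule.dualAnnihilator_top, Subspace.dualAnnihilator_inj]
end

section
/- Let K be any field, let X and Y be finite-dimensional vector spaces over K, and let α, β : X → Y be linear maps with β(ker α) ∩ im α = {0} in Y. Then the set of scalars t ∈ K for which ker(α + tβ) ≠ ker α ∩ ker β is finite; in particular, if K is infinite there exists t ∈ K with ker(α + tβ) = ker α ∩ ker β. (This is the paper's extension of the Perturbation Lemma to arbitrary fields, independent of characteristic.) -/
/-!
Let `p = β (ker α)` and `π : Y → Y ⧸ p`. The hypothesis makes `ker (π ∘ α) = ker α`, and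
`π ∘ β` vanishes on `ker α`, so `π ∘ β = E ∘ π ∘ α` for an endomorphism `E` of `Y ⧸ p`. Then
`π ∘ (α + t β) = (1 + t E) ∘ π ∘ α`, so whenever `t ≠ 0` and `-t⁻¹` is not an eigenvalue of `E`
we get `ker (α + t β) ≤ ker α`, which forces `ker (α + t β) = ker α ⊓ ker β`. Only finitely
many `t` are left over.
-/

open LinearMap Submodule

theorem LinearMap.ker_mkQ_comp_eq_of_inf_range_eq_bot {R V W : Type*} [Ring R]
    [AddCommGroup V] [Module R V] [AddCommGroup W] [Module R W]
    {α : V →ₗ[R] W} {p : Submodule R W} (h : p ⊓ range α = ⊥) :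
    ker (p.mkQ ∘ₗ α) = ker α := by
  refine le_antisymm (fun x hx => ?_) (ker_le_ker_comp α p.mkQ)
  have : α x ∈ p ⊓ range α := ⟨(Submodule.Quotient.mk_eq_zero p).mp hx, mem_range_self α x⟩
  rwa [h, mem_bot] at this

theorem LinearMap.ker_add_smul_le_ker_of_comp_eq {R V W U : Type*} [CommRing R]
    [AddCommGroup V] [Module R V] [AddCommGroup W] [Module R W] [AddCommGroup U] [Module R U]
    {α β : V →ₗ[R] W} {π : W →ₗ[R] U} {E : Module.End R U} {t : R}
    (hE : E ∘ₗ π ∘ₗ α = π ∘ₗ β) (ht : ker (1 + t • E) = ⊥) :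
    ker (α + t • β) ≤ ker (π ∘ₗ α) :=
  calc ker (α + t • β) ≤ ker (π ∘ₗ (α + t • β)) := ker_le_ker_comp _ _
    _ = ker ((1 + t • E) ∘ₗ π ∘ₗ α) := by
      congr 1
      ext x
      simpa using congrArg (t • ·) (LinearMap.congr_fun hE x).symm
    _ = ker (π ∘ₗ α) := ker_comp_of_ker_eq_bot _ ht

section Field

variable {K V W U : Type*} [Field K] [AddCommGroup V] [Module K V] [AddCommGroup W] [Module K W]
  [AddCommGroup U] [Module K U]

theorem LinearMap.exists_comp_eq_of_ker_le_s3 {A : V →ₗ[K] W} {B : V →ₗ[K] U}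
    (hAB : ker A ≤ ker B) : ∃ E : W →ₗ[K] U, E ∘ₗ A = B := by
  obtain ⟨E, hE⟩ := IsSemisimpleModule.extension_property ((ker A).liftQ A le_rfl)
    (LinearMap.ker_eq_bot.mp ((ker A).ker_liftQ_eq_bot A le_rfl le_rfl)) ((ker A).liftQ B hAB)
  refine ⟨E, ?_⟩
  rw [← (ker A).liftQ_mkQ A le_rfl, ← LinearMap.comp_assoc, hE, liftQ_mkQ]

theorem LinearMap.ker_add_smul_eq_inf_ker_s3 {α β : V →ₗ[K] W} {t : K} (ht : t ≠ 0)
    (hle : ker (α + t • β) ≤ ker α) : ker (α + t • β) = ker α ⊓ ker β := by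
  refine le_antisymm (fun x hx => ?_) fun x ⟨hα, hβ⟩ => ?_
  · have hαx : α x = 0 := hle hx
    have htβ : α x + t • β x = 0 := hx
    exact ⟨hαx, by simpa [hαx, ht] using htβ⟩
  · simp_all

theorem Module.End.finite_setOf_ker_one_add_smul_ne_bot [FiniteDimensional K V]
    (E : Module.End K V) : {t : K | ker (1 + t • E) ≠ ⊥}.Finite := by
  refine (E.finite_hasEigenvalue.image fun μ => -μ⁻¹).subset fun t ht => ?_
  obtain ⟨v, hv, hv0⟩ := (Submodule.ne_bot_iff _).mp ht
  have hEv : v + t • E v = 0 := hv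
  have ht0 : t ≠ 0 := by
    rintro rfl
    exact hv0 (by simpa using hEv)
  refine ⟨-t⁻¹, Module.End.hasEigenvalue_of_hasEigenvector ⟨?_, hv0⟩, by simp⟩
  rw [Module.End.mem_eigenspace_iff, neg_smul, ← smul_neg, ← eq_neg_of_add_eq_zero_right hEv,
    inv_smul_smul₀ ht0]

end Field

theorem perturbation_lemma_any_field_general
    (K : Type*) [Field K]
    (X Y : Type*) [AddCommGroup X] [Module K X]
    [AddCommGroup Y] [Module K Y] [FiniteDimensional K Y]
    (α β : X →ₗ[K] Y)
    (h : (LinearMap.ker α).map β ⊓ LinearMap.range α = ⊥) :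
    {t : K | LinearMap.ker (α + t • β) ≠ LinearMap.ker α ⊓ LinearMap.ker β}.Finite ∧
      (Infinite K →
        ∃ t : K, LinearMap.ker (α + t • β) = LinearMap.ker α ⊓ LinearMap.ker β) := by
  set p := (ker α).map β
  have hker : ker (p.mkQ ∘ₗ α) = ker α := ker_mkQ_comp_eq_of_inf_range_eq_bot h
  obtain ⟨E, hE⟩ : ∃ E : Module.End K (Y ⧸ p), E ∘ₗ p.mkQ ∘ₗ α = p.mkQ ∘ₗ β := by
    refine exists_comp_eq_of_ker_le_s3 fun x hx => ?_
    rw [hker] at hx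
    exact (Submodule.Quotient.mk_eq_zero p).mpr (mem_map_of_mem hx)
  have hbad : {t : K | ker (α + t • β) ≠ ker α ⊓ ker β} ⊆
      insert 0 {t | ker (1 + t • E) ≠ ⊥} := by
    intro t ht
    by_contra hgood
    simp only [Set.mem_insert_iff, Set.mem_ofPred_eq, not_or, not_not] at hgood
    exact ht (ker_add_smul_eq_inf_ker_s3 hgood.1 (hker ▸ ker_add_smul_le_ker_of_comp_eq hE hgood.2))
  have hfin := (E.finite_setOf_ker_one_add_smul_ne_bot.insert 0).subset hbad
  refine ⟨hfin, fun _ => ?_⟩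
  obtain ⟨t, ht⟩ := hfin.infinite_compl.nonempty
  exact ⟨t, not_not.mp ht⟩

/-- **Perturbation Lemma over an arbitrary field.**
If `β (ker α) ⊓ range α = ⊥`, then the set of scalars `t` with
`ker (α + t • β) ≠ ker α ⊓ ker β` is finite; in particular, over an infinite
field some `t` satisfies `ker (α + t • β) = ker α ⊓ ker β`. -/
theorem perturbation_lemma_any_field
    (K : Type*) [Field K]
    (X Y : Type*) [AddCommGroup X] [Module K X] [FiniteDimensional K X]
    [AddCommGroup Y] [Module K Y] [FiniteDimensional K Y]
    (α β : X →ₗ[K] Y)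
    (h : (LinearMap.ker α).map β ⊓ LinearMap.range α = ⊥) :
    {t : K | LinearMap.ker (α + t • β) ≠ LinearMap.ker α ⊓ LinearMap.ker β}.Finite ∧
      (Infinite K →
        ∃ t : K, LinearMap.ker (α + t • β) = LinearMap.ker α ⊓ LinearMap.ker β) :=
  perturbation_lemma_any_field_general K X Y α β h
end

section
/- Let X and Y be finite-dimensional real inner product spaces and let α, β : X → Y be linear maps with β(ker α) ∩ im α = {0} in Y. For ε ∈ ℝ let P(ε) : Y → Y denote the orthogonal projection of Y onto the subspace im(α + εβ), and let P∞ : Y → Y denote the orthogonal projection onto the subspace im α + β(ker α). Then P(ε) converges to P∞ (in operator norm) as ε tends to 0 through nonzero values. (This is part (1) of the Approximation Lemma: lim_{ε→0} im(α + εβ) = ⟨α(X), β(ker α)⟩.) -/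
/-!
Pick a complement `C` of `ker α` and let `A ε : C × β (ker α) → Y`, `(c, u) ↦ (α + ε β) c + u`.
Since `α + ε β = ε β` on `ker α`, the range of `A ε` is `im (α + ε β)` for `ε ≠ 0`, while
`A 0` has range `im α + β (ker α)` and is injective by the hypothesis. The projection onto the
range of an injective `T` is `T (T* T)⁻¹ T*`, and `T* T` stays invertible near `A 0`, so this
formula is continuous in `ε` at `0`.
-/

open Filter Topology

theorem LinearMap.coprod_add_smul_coprod_zero {R M N P : Type*} [CommSemiring R]
    [AddCommMonoid M] [Module R M] [AddCommMonoid N] [Module R N] [AddCommMonoid P] [Module R P]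
    (f g : M →ₗ[R] P) (h : N →ₗ[R] P) (c : R) :
    f.coprod h + c • g.coprod 0 = (f + c • g).coprod h := by
  ext <;> simp

section Complement

open LinearMap

variable {K V W : Type*} [Field K] [AddCommGroup V] [Module K V] [AddCommGroup W] [Module K W]

theorem LinearMap.range_eq_map_sup_map (f : V →ₗ[K] W) {C D : Submodule K V} (h : IsCompl C D) :
    range f = C.map f ⊔ D.map f := by
  rw [range_eq_map, ← h.sup_eq_top, Submodule.map_sup]

theorem Submodule.map_add_of_le_ker {f g : V →ₗ[K] W} {p : Submodule K V} (h : p ≤ ker f) :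
    p.map (f + g) = p.map g := by
  ext y
  simp only [Submodule.mem_map, LinearMap.add_apply]
  exact exists_congr fun x => and_congr_right fun hx => by rw [mem_ker.mp (h hx), zero_add]

variable (α β : V →ₗ[K] W) {C : Submodule K V}

theorem range_eq_map_of_isCompl_ker (hC : IsCompl C (ker α)) : range α = C.map α := by
  have hker : (ker α).map α = ⊥ := by
    rw [eq_bot_iff, Submodule.map_le_iff_le_comap, Submodule.comap_bot]
  rw [range_eq_map_sup_map α hC, hker, sup_bot_eq]

theorem range_add_smul_of_isCompl_ker (hC : IsCompl C (ker α)) {ε : K} (hε : ε ≠ 0) :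
    range (α + ε • β) = C.map (α + ε • β) ⊔ (ker α).map β := by
  rw [range_eq_map_sup_map _ hC, Submodule.map_add_of_le_ker le_rfl, Submodule.map_smul _ _ _ hε]

theorem range_coprod_comp_subtype (f : V →ₗ[K] W) (C : Submodule K V) (U : Submodule K W) :
    range ((f ∘ₗ C.subtype).coprod U.subtype) = C.map f ⊔ U := by
  rw [range_coprod, range_comp, Submodule.range_subtype, Submodule.range_subtype]

theorem range_coprod_comp_subtype_add_smul (f g : V →ₗ[K] W) (C : Submodule K V)
    (U : Submodule K W) (c : K) :
    range ((f ∘ₗ C.subtype).coprod U.subtype + c • (g ∘ₗ C.subtype).coprod 0) =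
      C.map (f + c • g) ⊔ U := by
  rw [coprod_add_smul_coprod_zero, ← smul_comp, ← add_comp, range_coprod_comp_subtype]

theorem injective_coprod_subtype (hC : Disjoint C (ker α)) {U : Submodule K W}
    (hU : Disjoint (range α) U) : Function.Injective ((α ∘ₗ C.subtype).coprod U.subtype) := by
  have hdisj : Disjoint (range (α ∘ₗ C.subtype)) (range U.subtype) := by
    rw [Submodule.range_subtype]
    exact hU.mono_left (range_comp_le_range _ _)
  rw [← ker_eq_bot, ker_coprod_of_disjoint_range _ _ hdisj, ker_comp, Submodule.ker_subtype,
    Submodule.disjoint_iff_comap_eq_bot.mp hC, Submodule.prod_bot]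

end Complement

section Gram

open ContinuousLinearMap

variable {E F : Type*} [NormedAddCommGroup E] [InnerProductSpace ℝ E]
  [FiniteDimensional ℝ E] [NormedAddCommGroup F] [InnerProductSpace ℝ F] [FiniteDimensional ℝ F]

theorem isUnit_adjoint_comp_self {T : E →L[ℝ] F} (hT : Function.Injective T) :
    IsUnit (adjoint T ∘L T) := by
  have hinj : Function.Injective (adjoint T ∘L T) := by
    rw [coe_comp]; exact (adjoint_comp_self_injective_iff T).mpr hT
  exact (adjoint T ∘L T).isUnit_iff_bijective.mpr
    ⟨hinj, LinearMap.injective_iff_surjective (f := (adjoint T ∘L T : E →ₗ[ℝ] E)) |>.mp hinj⟩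

theorem starProjection_range_eq_of_isUnit_adjoint_comp_self {T : E →L[ℝ] F}
    (hT : IsUnit (adjoint T ∘L T)) :
    (T : E →ₗ[ℝ] F).range.starProjection =
      T ∘L Ring.inverse (adjoint T ∘L T) ∘L adjoint T := by
  ext y
  rw [comp_apply, comp_apply]
  set x₀ := Ring.inverse (adjoint T ∘L T) (adjoint T y)
  have hmem : T x₀ ∈ (T : E →ₗ[ℝ] F).range := LinearMap.mem_range_self (T : E →ₗ[ℝ] F) x₀
  refine Submodule.eq_starProjection_of_mem_of_inner_eq_zero hmem ?_
  rintro _ ⟨x, rfl⟩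
  have hnormal : adjoint T (T x₀) = adjoint T y := by
    change ((adjoint T ∘L T) * Ring.inverse (adjoint T ∘L T)) (adjoint T y) = _
    rw [Ring.mul_inverse_cancel _ hT, one_apply_eq_self]
  rw [coe_coe, ← adjoint_inner_left, map_sub, hnormal, sub_self, inner_zero_left]

theorem continuousAt_starProjection_range {T : E →L[ℝ] F} (hT : Function.Injective T) :
    ContinuousAt (fun S : E →L[ℝ] F => (S : E →ₗ[ℝ] F).range.starProjection) T := by
  have hU := isUnit_adjoint_comp_self hT
  have hadjoint : Continuous (adjoint : (E →L[ℝ] F) → F →L[ℝ] E) := adjoint.continuous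
  have hgram : Continuous fun S : E →L[ℝ] F => adjoint S ∘L S := hadjoint.clm_comp continuous_id
  have hinverse : ContinuousAt (fun S : E →L[ℝ] F => Ring.inverse (adjoint S ∘L S)) T := by
    have := NormedRing.inverse_continuousAt hU.unit
    rw [hU.unit_spec] at this
    exact this.comp (f := fun S : E →L[ℝ] F => adjoint S ∘L S) hgram.continuousAt
  refine (continuousAt_id.clm_comp (hinverse.clm_comp hadjoint.continuousAt)).congr ?_
  filter_upwards [hgram.continuousAt.eventually (Units.isOpen.mem_nhds hU)] with S hS
  exact (starProjection_range_eq_of_isUnit_adjoint_comp_self hS).symm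

end Gram

theorem tendsto_starProjection_range_add_smul {E F : Type*} [AddCommGroup E] [Module ℝ E]
    [FiniteDimensional ℝ E] [NormedAddCommGroup F] [InnerProductSpace ℝ F] [FiniteDimensional ℝ F]
    (A B : E →ₗ[ℝ] F) (hA : Function.Injective A) :
    Tendsto (fun ε : ℝ => (A + ε • B).range.starProjection) (𝓝 0)
      (𝓝 A.range.starProjection) := by
  -- A Euclidean model of `E` makes adjoints, hence the Gram-operator formula, available.
  let e : EuclideanSpace ℝ (Fin (Module.finrank ℝ E)) ≃ₗ[ℝ] E :=
    LinearEquiv.ofFinrankEq _ _ (by simp)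
  let T : ℝ → EuclideanSpace ℝ (Fin (Module.finrank ℝ E)) →L[ℝ] F := fun ε =>
    LinearMap.toContinuousLinearMap (A ∘ₗ e.toLinearMap) +
      ε • LinearMap.toContinuousLinearMap (B ∘ₗ e.toLinearMap)
  have hrange (ε : ℝ) : (T ε).toLinearMap.range = (A + ε • B).range := by
    have hcoe : (T ε).toLinearMap = (A + ε • B) ∘ₗ e.toLinearMap := by
      ext; simp [T]
    rw [hcoe, LinearMap.range_comp_of_range_eq_top _ e.range]
  have hT : Continuous T := continuous_const.add (continuous_id.smul continuous_const)
  have hT₀ : Function.Injective (T 0) := by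
    simpa [T] using hA.comp e.injective
  have hlim := (continuousAt_starProjection_range hT₀).tendsto.comp hT.continuousAt
  simpa only [Function.comp_def, hrange, zero_smul, add_zero] using hlim

theorem approximation_lemma_image_general
    (X Y : Type*) [NormedAddCommGroup X] [InnerProductSpace ℝ X]
    [NormedAddCommGroup Y] [InnerProductSpace ℝ Y] [FiniteDimensional ℝ Y]
    (α β : X →ₗ[ℝ] Y)
    (h : (LinearMap.ker α).map β ⊓ LinearMap.range α = ⊥) :
    Tendsto
      (fun ε : ℝ =>
        (LinearMap.range (α + ε • β)).subtypeL.comp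
          (Submodule.orthogonalProjection (LinearMap.range (α + ε • β))))
      (𝓝[≠] (0 : ℝ))
      (𝓝 ((LinearMap.range α ⊔ (LinearMap.ker α).map β).subtypeL.comp
          (Submodule.orthogonalProjection
            (LinearMap.range α ⊔ (LinearMap.ker α).map β)))) := by
  obtain ⟨C, hC⟩ := (LinearMap.ker α).exists_isCompl
  have hinj : Function.Injective ((α ∘ₗ C.subtype).coprod ((LinearMap.ker α).map β).subtype) :=
    injective_coprod_subtype α hC.symm.disjoint (disjoint_iff.mpr h).symm
  have : FiniteDimensional ℝ (C × (LinearMap.ker α).map β) := Module.Finite.of_injective _ hinj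
  have hlim := tendsto_starProjection_range_add_smul _ ((β ∘ₗ C.subtype).coprod 0) hinj
  simp only [range_coprod_comp_subtype, ← range_eq_map_of_isCompl_ker α hC.symm] at hlim
  refine (hlim.mono_left nhdsWithin_le_nhds).congr' ?_
  filter_upwards [self_mem_nhdsWithin] with ε hε
  simp only [range_coprod_comp_subtype_add_smul, ← range_add_smul_of_isCompl_ker α β hC.symm hε]
  rfl

/-- **Approximation Lemma, part (1).**
If `β (ker α) ⊓ range α = ⊥`, then the orthogonal projection onto
`range (α + ε • β)` converges in operator norm, as `ε → 0` through nonzero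
values, to the orthogonal projection onto `range α ⊔ β (ker α)`. -/
theorem approximation_lemma_image
    (X Y : Type*) [NormedAddCommGroup X] [InnerProductSpace ℝ X]
    [FiniteDimensional ℝ X]
    [NormedAddCommGroup Y] [InnerProductSpace ℝ Y] [FiniteDimensional ℝ Y]
    (α β : X →ₗ[ℝ] Y)
    (h : (LinearMap.ker α).map β ⊓ LinearMap.range α = ⊥) :
    Tendsto
      (fun ε : ℝ =>
        (LinearMap.range (α + ε • β)).subtypeL.comp
          (Submodule.orthogonalProjection (LinearMap.range (α + ε • β))))
      (𝓝[≠] (0 : ℝ))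
      (𝓝 ((LinearMap.range α ⊔ (LinearMap.ker α).map β).subtypeL.comp
          (Submodule.orthogonalProjection
            (LinearMap.range α ⊔ (LinearMap.ker α).map β)))) :=
  approximation_lemma_image_general X Y α β h
end

section
/- Let n be a natural number, let (e_i)_{i<n} be the standard basis of ℝⁿ, and let α : ℝⁿ → ℝⁿ be the linear map with α(e_i) = (−1)^i e_i. Let S be the linear span inside the second exterior power Λ²(ℝⁿ) of all elements e_i ∧ e_j with i ≡ j (mod 2), let Y = Λ²(ℝⁿ)/S with quotient map π, and define δ : ℝⁿ × ℝⁿ → Y by δ(x, y) = π(x ∧ α(y)). Then δ is symmetric: δ(x, y) = δ(y, x) for all x, y ∈ ℝⁿ. -/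
open ExteriorAlgebra

/-- **Kazhdan's example: symmetry of the multiplication.**
Let `α : ℝⁿ → ℝⁿ` send `eᵢ ↦ (-1)^i eᵢ`, let `S ⊆ Λ²(ℝⁿ)` be the span of
the wedges `eᵢ ∧ eⱼ` for `i < j` of equal parity, let `Y = Λ²(ℝⁿ)/S` with
quotient map `π`, and let `δ(x, y) = π (x ∧ α y)`.  Then `δ` is symmetric. -/
theorem kazhdan_example_symmetric
    (n : ℕ)
    (α : (Fin n → ℝ) →ₗ[ℝ] (Fin n → ℝ))
    (hα : ∀ i : Fin n, α (Pi.single i (1 : ℝ)) = ((-1 : ℝ) ^ (i : ℕ)) • (Pi.single i (1 : ℝ) : Fin n → ℝ))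
    (w : (Fin n → ℝ) → (Fin n → ℝ) → ↥(⋀[ℝ]^2 (Fin n → ℝ)))
    (hw : ∀ x y, (w x y : ExteriorAlgebra ℝ (Fin n → ℝ)) =
      ExteriorAlgebra.ι ℝ x * ExteriorAlgebra.ι ℝ y)
    (S : Submodule ℝ ↥(⋀[ℝ]^2 (Fin n → ℝ)))
    (hS : S = Submodule.span ℝ
      {u | ∃ i j : Fin n, i < j ∧ (i : ℕ) % 2 = (j : ℕ) % 2 ∧
        u = w (Pi.single i (1 : ℝ)) (Pi.single j (1 : ℝ))})
    (δ : (Fin n → ℝ) → (Fin n → ℝ) → (↥(⋀[ℝ]^2 (Fin n → ℝ)) ⧸ S))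
    (hδ : ∀ x y, δ x y = Submodule.mkQ S (w x (α y))) :
    ∀ x y, δ x y = δ y x := by
  -- basic bilinearity of `w`, via injectivity of the coercion
  have coe_inj : Function.Injective
      (Subtype.val : ↥(⋀[ℝ]^2 (Fin n → ℝ)) → ExteriorAlgebra ℝ (Fin n → ℝ)) :=
    Subtype.coe_injective
  have w_add_left : ∀ x x' y, w (x + x') y = w x y + w x' y := fun x x' y => by
    apply coe_inj; push_cast [hw]; rw [map_add, add_mul]
  have w_smul_left : ∀ (c : ℝ) x y, w (c • x) y = c • w x y := fun c x y => by
    apply coe_inj; push_cast [hw]; rw [map_smul, smul_mul_assoc]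
  have w_add_right : ∀ x y y', w x (y + y') = w x y + w x y' := fun x y y' => by
    apply coe_inj; push_cast [hw]; rw [map_add, mul_add]
  have w_smul_right : ∀ (c : ℝ) x y, w x (c • y) = c • w x y := fun c x y => by
    apply coe_inj; push_cast [hw]; rw [map_smul, mul_smul_comm]
  have w_swap : ∀ x y, w y x = - w x y := fun x y => by
    apply coe_inj; push_cast [hw]
    exact eq_neg_of_add_eq_zero_left (by rw [add_comm]; exact ι_add_mul_swap x y)
  have w_diag : ∀ x, w x x = 0 := fun x => by
    apply coe_inj; push_cast [hw]; exact ι_sq_zero x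
  set E : Fin n → (Fin n → ℝ) := fun i => Pi.single i (1 : ℝ) with hE
  -- membership of basis wedges
  have mem_basic : ∀ i j : Fin n, (i : ℕ) % 2 = (j : ℕ) % 2 → w (E i) (E j) ∈ S := by
    intro i j hij
    rcases lt_trichotomy i j with h | h | h
    · rw [hS]; exact Submodule.subset_span ⟨i, j, h, hij, rfl⟩
    · rw [h, w_diag]; exact S.zero_mem
    · rw [w_swap]
      exact S.neg_mem (hS ▸ Submodule.subset_span ⟨j, i, h, hij.symm, rfl⟩)
  -- key base-case membership
  have key_basic : ∀ i j : Fin n, w (E i) (α (E j)) - w (E j) (α (E i)) ∈ S := by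
    intro i j
    rw [hE]
    rw [hα i, hα j, w_smul_right, w_smul_right, ← hE]
    rw [w_swap (E i) (E j)]
    have : ((-1 : ℝ) ^ (j : ℕ)) • w (E i) (E j) -
        ((-1 : ℝ) ^ (i : ℕ)) • -w (E i) (E j)
        = ((-1 : ℝ) ^ (j : ℕ) + (-1 : ℝ) ^ (i : ℕ)) • w (E i) (E j) := by
      rw [smul_neg, sub_neg_eq_add, add_smul, add_comm]
    rw [this]
    by_cases hpar : (i : ℕ) % 2 = (j : ℕ) % 2
    · exact S.smul_mem _ (mem_basic i j hpar)
    · have hi := Nat.mod_two_eq_zero_or_one (i : ℕ)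
      have hj := Nat.mod_two_eq_zero_or_one (j : ℕ)
      have hz : ((-1 : ℝ) ^ (j : ℕ) + (-1 : ℝ) ^ (i : ℕ)) = 0 := by
        rcases hi with hi | hi <;> rcases hj with hj | hj
        · exact absurd (hi.trans hj.symm) hpar
        · rw [(Nat.odd_iff.mpr hj).neg_one_pow, (Nat.even_iff.mpr hi).neg_one_pow]; ring
        · rw [(Nat.even_iff.mpr hj).neg_one_pow, (Nat.odd_iff.mpr hi).neg_one_pow]; ring
        · exact absurd (hi.trans hj.symm) hpar
      rw [hz, zero_smul]; exact S.zero_mem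
  -- general membership by bilinearity
  have key : ∀ x y : Fin n → ℝ, w x (α y) - w y (α x) ∈ S := by
    intro x y
    have hx : x = ∑ i, x i • E i := by
      simp [hE, ← Pi.single_smul, Finset.univ_sum_single]
    have hy : y = ∑ j, y j • E j := by
      simp [hE, ← Pi.single_smul, Finset.univ_sum_single]
    rw [hx, hy]
    -- expand in both arguments
    have expand : ∀ (u v : Fin n → Fin n → ℝ) (a b : Fin n → ℝ),
        w (∑ i, a i • u i) (α (∑ j, b j • v j))
          = ∑ i, ∑ j, (a i * b j) • w (u i) (α (v j)) := by
      intro u v a b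
      have h1 : ∀ z, w (∑ i, a i • u i) z = ∑ i, a i • w (u i) z := by
        intro z
        induction (Finset.univ : Finset (Fin n)) using Finset.induction with
        | empty =>
          simp only [Finset.sum_empty]
          apply coe_inj; push_cast [hw]; simp
        | insert _ _ hni ih =>
          rw [Finset.sum_insert hni, Finset.sum_insert hni, w_add_left,
            w_smul_left, ih]
      rw [h1]
      refine Finset.sum_congr rfl fun i _ => ?_
      rw [map_sum]
      have h2 : w (u i) (∑ j, b j • α (v j)) = ∑ j, b j • w (u i) (α (v j)) := by
        induction (Finset.univ : Finset (Fin n)) using Finset.induction with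
        | empty =>
          simp only [Finset.sum_empty]
          apply coe_inj; push_cast [hw]; simp
        | insert _ _ hni ih =>
          rw [Finset.sum_insert hni, Finset.sum_insert hni, w_add_right,
            w_smul_right, ih]
      simp only [map_smul] at h2 ⊢
      rw [h2, Finset.smul_sum]
      exact Finset.sum_congr rfl fun j _ => (smul_smul (a i) (b j) _)
    rw [expand E E x y, expand E E y x]
    have hcomm : ∑ i, ∑ j, (y i * x j) • w (E i) (α (E j))
        = ∑ i, ∑ j, (y j * x i) • w (E j) (α (E i)) :=
      Finset.sum_comm
    rw [hcomm, ← Finset.sum_sub_distrib]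
    apply Submodule.sum_mem
    intro i _
    rw [← Finset.sum_sub_distrib]
    apply Submodule.sum_mem
    intro j _
    have : (x i * y j) • w (E i) (α (E j)) - (y j * x i) • w (E j) (α (E i))
        = (x i * y j) • (w (E i) (α (E j)) - w (E j) (α (E i))) := by
      rw [smul_sub, mul_comm (y j) (x i)]
    rw [this]
    exact S.smul_mem _ (key_basic i j)
  intro x y
  rw [hδ, hδ]
  rw [Submodule.mkQ_apply, Submodule.mkQ_apply, Submodule.Quotient.eq]
  exact key x y
end

section
/- Let n ≥ 1, let (e_i)_{i<n} be the standard basis of ℝⁿ, let α : ℝⁿ → ℝⁿ be the linear map with α(e_i) = (−1)^i e_i, let S ⊆ Λ²(ℝⁿ) be the span of all e_i ∧ e_j with i < j and i ≡ j (mod 2), let Y = Λ²(ℝⁿ)/S with quotient map π, and define δ(x, y) = π(x ∧ α(y)). Then δ(ℓ, α(ℓ)) = 0 for every ℓ ∈ ℝⁿ, and consequently for every ℓ ∈ ℝⁿ the linear map y ↦ δ(ℓ, y) from ℝⁿ to Y is not injective. (This is Kazhdan's example showing that multiplication by a degree-one element is never an injection.) -/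
open ExteriorAlgebra

/-- **Kazhdan's example: multiplication by a degree-one element is never
injective.**  With `α`, `S`, `Y = Λ²(ℝⁿ)/S` and `δ(x, y) = π (x ∧ α y)` as in
Kazhdan's example and `n ≥ 1`, one has `δ(ℓ, α ℓ) = 0` for every `ℓ`, and
consequently `y ↦ δ(ℓ, y)` is not injective for any `ℓ`. -/
theorem kazhdan_example_not_injective
    (n : ℕ) (hn : 1 ≤ n)
    (α : (Fin n → ℝ) →ₗ[ℝ] (Fin n → ℝ))
    (hα : ∀ i : Fin n, α (Pi.single i (1 : ℝ)) = ((-1 : ℝ) ^ (i : ℕ)) • (Pi.single i (1 : ℝ) : Fin n → ℝ))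
    (w : (Fin n → ℝ) → (Fin n → ℝ) → ↥(⋀[ℝ]^2 (Fin n → ℝ)))
    (hw : ∀ x y, (w x y : ExteriorAlgebra ℝ (Fin n → ℝ)) =
      ExteriorAlgebra.ι ℝ x * ExteriorAlgebra.ι ℝ y)
    (S : Submodule ℝ ↥(⋀[ℝ]^2 (Fin n → ℝ)))
    (hS : S = Submodule.span ℝ
      {u | ∃ i j : Fin n, i < j ∧ (i : ℕ) % 2 = (j : ℕ) % 2 ∧
        u = w (Pi.single i (1 : ℝ)) (Pi.single j (1 : ℝ))})
    (δ : (Fin n → ℝ) → (Fin n → ℝ) → (↥(⋀[ℝ]^2 (Fin n → ℝ)) ⧸ S))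
    (hδ : ∀ x y, δ x y = Submodule.mkQ S (w x (α y))) :
    (∀ ℓ : Fin n → ℝ, δ ℓ (α ℓ) = 0) ∧
      (∀ ℓ : Fin n → ℝ, ¬ Function.Injective fun y => δ ℓ y) := by
  -- α is an involution
  have hαα : ∀ v : Fin n → ℝ, α (α v) = v := by
    intro v
    have h : α.comp α = LinearMap.id := by
      apply Module.Basis.ext (Pi.basisFun ℝ (Fin n))
      intro i
      simp only [Pi.basisFun_apply, LinearMap.comp_apply, LinearMap.id_apply]
      rw [hα i, map_smul, hα i, smul_smul, ← pow_add, ← two_mul, pow_mul]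
      norm_num
    calc α (α v) = (α.comp α) v := rfl
      _ = v := by rw [h]; rfl
  -- w x x = 0
  have hcoe : ∀ u : ↥(⋀[ℝ]^2 (Fin n → ℝ)),
      (u : ExteriorAlgebra ℝ (Fin n → ℝ)) = 0 → u = 0 := by
    intro u hu
    exact Subtype.ext (by simpa using hu)
  have hww : ∀ x : Fin n → ℝ, w x x = 0 := by
    intro x
    exact hcoe _ (by rw [hw]; exact ExteriorAlgebra.ι_sq_zero x)
  have hw0 : ∀ x : Fin n → ℝ, w x 0 = 0 := by
    intro x
    exact hcoe _ (by rw [hw]; simp)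
  have h0w : ∀ y : Fin n → ℝ, w 0 y = 0 := by
    intro y
    exact hcoe _ (by rw [hw]; simp)
  have part1 : ∀ ℓ : Fin n → ℝ, δ ℓ (α ℓ) = 0 := by
    intro ℓ
    rw [hδ, hαα, hww, map_zero]
  refine ⟨part1, ?_⟩
  intro ℓ hinj
  have hδ0 : δ ℓ 0 = 0 := by rw [hδ, map_zero, hw0, map_zero]
  have hαℓ : α ℓ = 0 := hinj ((part1 ℓ).trans hδ0.symm)
  have hℓ : ℓ = 0 := by rw [← hαα ℓ, hαℓ, map_zero]
  have i0 : Fin n := ⟨0, hn⟩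
  have h1 : δ ℓ (Pi.single i0 (1:ℝ)) = 0 := by
    rw [hδ, hℓ, h0w, map_zero]
  have := hinj (h1.trans hδ0.symm)
  have := congrFun this i0
  simp at this
end

section
/- Let A = A_0 ⊕ A_1 ⊕ … ⊕ A_d be a finite-dimensional graded commutative ℝ-algebra with A_d one-dimensional, let deg : A_d → ℝ be a linear isomorphism, and assume A is a Poincaré duality algebra: for every k with 0 ≤ k ≤ d, the pairing A_k × A_{d−k} → ℝ, (a, b) ↦ deg(ab), is a perfect pairing. Let I be a homogeneous ideal of A, let I_j = I ∩ A_j, and fix k with 0 ≤ k ≤ d. Then the following are equivalent: (1) the restriction to I_k of the quotient map A → A/ann_A(I) is injective, where ann_A(I) = {b ∈ A : a·b = 0 for all a ∈ I}; (2) I satisfies biased Poincaré duality in degree k, i.e. the pairing I_k × I_{d−k} → ℝ, (a, b) ↦ deg(ab), is nondegenerate in the first factor (for every nonzero a ∈ I_k there exists b ∈ I_{d−k} with deg(ab) ≠ 0). -/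
/-- The annihilator `{b : A | ∀ a ∈ I, a * b = 0}` of an ideal `I` of a
commutative ring `A`, as an ideal of `A`. -/
def annihilatorIdeal {A : Type*} [CommRing A] (I : Ideal A) : Ideal A where
  carrier := {b : A | ∀ a ∈ I, a * b = 0}
  zero_mem' := fun a _ => mul_zero a
  add_mem' := fun hb hc a ha => by
    rw [mul_add, hb a ha, hc a ha, add_zero]
  smul_mem' := fun c b hb a ha => by
    rw [smul_eq_mul, mul_comm c b, ← mul_assoc, hb a ha, zero_mul]

/-- **Biased Poincaré duality via the annihilator.**
Let `A = A₀ ⊕ ⋯ ⊕ A_d` be a finite-dimensional graded commutative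
Poincaré duality ℝ-algebra with fundamental-class isomorphism
`deg : A_d ≃ ℝ`, let `I` be a homogeneous ideal, and let `k ≤ d`.  Then the
quotient map `A → A / ann(I)` is injective on `I_k = I ∩ A_k` if and only if
the pairing `I_k × I_{d-k} → ℝ`, `(a, b) ↦ deg (a b)`, is nondegenerate in the
first factor. -/
theorem biased_poincare_duality_iff_injective_mod_annihilator
    (A : Type*) [CommRing A] [Algebra ℝ A] [FiniteDimensional ℝ A]
    (d : ℕ) (𝒜 : ℕ → Submodule ℝ A)
    (hdirect : DirectSum.IsInternal fun i : ℕ => 𝒜 i)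
    (hbound : ∀ i : ℕ, d < i → 𝒜 i = ⊥)
    (hmul : ∀ i j : ℕ, ∀ a ∈ 𝒜 i, ∀ b ∈ 𝒜 j, a * b ∈ 𝒜 (i + j))
    (htop : Module.finrank ℝ ↥(𝒜 d) = 1)
    (deg : ↥(𝒜 d) ≃ₗ[ℝ] ℝ)
    (hperfect : ∀ k : ℕ, k ≤ d →
      (∀ a ∈ 𝒜 k, a ≠ 0 →
        ∃ b ∈ 𝒜 (d - k), ∃ h : a * b ∈ 𝒜 d, deg ⟨a * b, h⟩ ≠ 0) ∧
      (∀ b ∈ 𝒜 (d - k), b ≠ 0 →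
        ∃ a ∈ 𝒜 k, ∃ h : a * b ∈ 𝒜 d, deg ⟨a * b, h⟩ ≠ 0))
    (I : Ideal A)
    (hIhom : I.restrictScalars ℝ = ⨆ j : ℕ, (I.restrictScalars ℝ ⊓ 𝒜 j))
    (k : ℕ) (hk : k ≤ d) :
    Set.InjOn (Ideal.Quotient.mk (annihilatorIdeal I))
        {b : A | b ∈ I ∧ b ∈ 𝒜 k} ↔
      ∀ a : A, a ∈ I → a ∈ 𝒜 k → a ≠ 0 →
        ∃ b : A, b ∈ I ∧ b ∈ 𝒜 (d - k) ∧
          ∃ h : a * b ∈ 𝒜 d, deg ⟨a * b, h⟩ ≠ 0 := by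

  constructor
  · intro hinj a haI hak ha0
    have hann : ¬ (a ∈ annihilatorIdeal I) := by
      intro h
      exact ha0 (hinj (Set.mem_setOf.mpr ⟨haI, hak⟩)
        (Set.mem_setOf.mpr ⟨I.zero_mem, (𝒜 k).zero_mem⟩)
        (by rw [Ideal.Quotient.eq]; simpa using h))
    have hann' : ¬ ∀ c ∈ I, c * a = 0 := fun h => hann h
    push_neg at hann'
    obtain ⟨c, hcI, hca⟩ := hann'
    have hc : c ∈ ⨆ j : ℕ, (I.restrictScalars ℝ ⊓ 𝒜 j) := by
      rw [← hIhom]; exact hcI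
    rw [Submodule.mem_iSup_iff_exists_finsupp] at hc
    obtain ⟨f, hf, hsum⟩ := hc
    have hca' : a * c ≠ 0 := by rwa [mul_comm] at hca
    have hsum' : a * c = f.sum fun j m => a * m := by
      rw [← hsum, Finsupp.sum, Finsupp.sum, Finset.mul_sum]
    have hex : ∃ j ∈ f.support, a * f j ≠ 0 := by
      by_contra h
      push_neg at h
      exact hca' (by rw [hsum', Finsupp.sum, Finset.sum_eq_zero h])
    obtain ⟨j, hjs, hj0⟩ := hex
    have hfjI : f j ∈ I := (hf j).1
    have hfjA : f j ∈ 𝒜 j := (hf j).2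
    have hkj : k + j ≤ d := by
      by_contra h
      push_neg at h
      apply hj0
      have hm : a * f j ∈ 𝒜 (k + j) := hmul k j a hak (f j) hfjA
      rw [hbound _ h] at hm
      simpa using hm
    obtain ⟨e, heA, hmem, hdeg⟩ :=
      (hperfect (k + j) hkj).1 (a * f j) (hmul k j a hak _ hfjA) hj0
    refine ⟨f j * e, I.mul_mem_right e hfjI, ?_, ?_⟩
    · have hm : f j * e ∈ 𝒜 (j + (d - (k + j))) := hmul _ _ _ hfjA _ heA
      rwa [show j + (d - (k + j)) = d - k by omega] at hm
    · have h2 : a * (f j * e) ∈ 𝒜 d := by rw [← mul_assoc]; exact hmem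
      refine ⟨h2, ?_⟩
      have heq : (⟨a * (f j * e), h2⟩ : 𝒜 d) = ⟨a * f j * e, hmem⟩ :=
        Subtype.ext (by ring)
      rw [heq]; exact hdeg
  · intro hpd x hx y hy hxy
    by_contra hne
    have hsubI : x - y ∈ I := I.sub_mem hx.1 hy.1
    have hsubA : x - y ∈ 𝒜 k := Submodule.sub_mem _ hx.2 hy.2
    have hsub0 : x - y ≠ 0 := sub_ne_zero.mpr hne
    obtain ⟨b, hbI, hbA, hmem, hdeg⟩ := hpd _ hsubI hsubA hsub0
    have hannmem : x - y ∈ annihilatorIdeal I := Ideal.Quotient.eq.mp hxy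
    have hz : (x - y) * b = 0 := by rw [mul_comm]; exact hannmem b hbI
    apply hdeg
    have hzz : (⟨(x - y) * b, hmem⟩ : 𝒜 d) = 0 := Subtype.ext hz
    rw [hzz, map_zero]
end

section
/- Let k ≥ 2, let Δ be a finite abstract simplicial complex on a finite vertex set V, and let p : V → ℝ^{2k+1} be a map such that for every (k−1)-face τ of Δ the vectors {p(v) : v ∈ τ} are linearly independent. Let W_{k+1}(Δ, p) be the space of Minkowski weights on k-faces (balancing condition over (k−1)-faces) and let W_k(Δ, p) be the space of Minkowski weights on (k−1)-faces (balancing condition over (k−2)-faces). If dim W_{k+1}(Δ, p) ≤ dim W_k(Δ, p), then f_k(Δ) ≤ (k+2)·f_{k−1}(Δ), where f_j(Δ) is the number of j-dimensional faces of Δ. (This is the numerical step deriving the Grünbaum–Kalai–Sarkaria bound from monotonicity of the weight spaces.) -/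
/-!
The balancing conditions of `W_{k+1}` say that, for each `(k-1)`-face `τ`, a linear map
`ℝ^{f_k} → ℝ^{2k+1}` lands in the span of `τ`, which is `k`-dimensional by linear
independence; so `W_{k+1}` is cut out by
`(k+1) f_{k-1}` linear equations and `f_k ≤ (k+1) f_{k-1} + dim W_{k+1}`. Combined with
`dim W_{k+1} ≤ dim W_k ≤ f_{k-1}` this gives `f_k ≤ (k+2) f_{k-1}`.
-/

open Module

section LinearAlgebra

variable {K M E J : Type*} [Field K] [AddCommGroup M] [Module K M] [AddCommGroup E] [Module K E]

theorem finrank_le_finrank_iInf_comap_add_sum_finrank_quotient [Fintype J]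
    [FiniteDimensional K M] [FiniteDimensional K E] (f : J → M →ₗ[K] E) (S : J → Submodule K E) :
    finrank K M ≤ finrank K ↥(⨅ j, (S j).comap (f j)) + ∑ j, finrank K (E ⧸ S j) := by
  let F : M →ₗ[K] ∀ j, E ⧸ S j := LinearMap.pi fun j => (S j).mkQ ∘ₗ f j
  have hker : LinearMap.ker F = ⨅ j, (S j).comap (f j) := by
    ext c
    simp [F, funext_iff, Submodule.mem_iInf]
  calc finrank K M = finrank K (LinearMap.range F) + finrank K (LinearMap.ker F) :=
        (LinearMap.finrank_range_add_finrank_ker F).symm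
    _ ≤ finrank K (∀ j, E ⧸ S j) + finrank K (LinearMap.ker F) := by
        gcongr; exact Submodule.finrank_le _
    _ = _ := by rw [hker, finrank_pi_fintype, add_comm]

theorem finrank_quotient_span_image_of_linearIndependent [FiniteDimensional K E] {V : Type*}
    {p : V → E} {τ : Finset V} (hp : LinearIndependent K fun v : τ => p v) :
    finrank K (E ⧸ Submodule.span K (p '' ↑τ)) = finrank K E - τ.card := by
  have hrange : p '' ↑τ = Set.range fun v : τ => p v := by ext; simp
  rw [Submodule.finrank_quotient, hrange, finrank_span_eq_card hp, Fintype.card_coe]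

end LinearAlgebra

section Balancing

variable {K V E : Type*} [Field K] [AddCommGroup E] [Module K E] [DecidableEq V]
  {P : Finset V → Prop} [Fintype {σ // P σ}]

/-- For `σ ⊋ τ` with one more vertex, the sum over `σ \ τ` is the paper's `p(v_{σ∖τ})`. -/
def balancingMap (p : V → E) (τ : Finset V) : ({σ // P σ} → K) →ₗ[K] E :=
  Fintype.linearCombination K fun σ => if τ ⊆ σ.1 then ∑ v ∈ σ.1 \ τ, p v else 0

theorem balancingMap_apply (p : V → E) (τ : Finset V) (c : {σ // P σ} → K) :
    balancingMap p τ c = ∑ σ, if τ ⊆ σ.1 then ∑ v ∈ σ.1 \ τ, c σ • p v else 0 := by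
  rw [balancingMap, Fintype.linearCombination_apply]
  refine Finset.sum_congr rfl fun σ _ => ?_
  split_ifs <;> simp [Finset.smul_sum]

end Balancing

theorem Fintype.card_subtype_mem_and {α : Type*} (s : Finset α) (P : α → Prop) [DecidablePred P]
    [Fintype {a // a ∈ s ∧ P a}] : Fintype.card {a // a ∈ s ∧ P a} = (s.filter P).card := by
  rw [← Fintype.card_coe]
  exact Fintype.card_congr (Equiv.subtypeEquivRight fun a => Finset.mem_filter.symm)

theorem gks_bound_from_weight_monotonicity_general
    (k : ℕ)
    (V : Type*) [Fintype V] [DecidableEq V]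
    (Δ : Finset (Finset V))
    (p : V → (Fin (2 * k + 1) → ℝ))
    (hp : ∀ τ ∈ Δ, τ.card = k →
      LinearIndependent ℝ (fun v : {x // x ∈ τ} => p v))
    (Wk1 : Submodule ℝ ({σ : Finset V // σ ∈ Δ ∧ σ.card = k + 1} → ℝ))
    (hWk1 : ∀ c, c ∈ Wk1 ↔
      ∀ τ ∈ Δ, τ.card = k →
        (∑ σ : {σ : Finset V // σ ∈ Δ ∧ σ.card = k + 1},
            if τ ⊆ σ.1 then ∑ v ∈ σ.1 \ τ, c σ • p v else 0)
          ∈ Submodule.span ℝ (p '' ↑τ))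
    (Wk : Submodule ℝ ({σ : Finset V // σ ∈ Δ ∧ σ.card = k} → ℝ))
    (hmono : Module.finrank ℝ ↥Wk1 ≤ Module.finrank ℝ ↥Wk) :
    (Δ.filter fun σ => σ.card = k + 1).card
      ≤ (k + 2) * (Δ.filter fun σ => σ.card = k).card := by
  let B := {τ : Finset V // τ ∈ Δ ∧ τ.card = k}
  have hWk1_eq : Wk1 = ⨅ τ : B, (Submodule.span ℝ (p '' ↑τ.1)).comap (balancingMap p τ.1) := by
    ext c
    simp only [hWk1, Submodule.mem_iInf, Submodule.mem_comap, balancingMap_apply]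
    exact ⟨fun h τ => h τ.1 τ.2.1 τ.2.2, fun h τ hτΔ hτk => h ⟨τ, hτΔ, hτk⟩⟩
  have hquot (τ : B) : finrank ℝ (_ ⧸ Submodule.span ℝ (p '' ↑τ.1)) = k + 1 := by
    rw [finrank_quotient_span_image_of_linearIndependent (hp τ.1 τ.2.1 τ.2.2), τ.2.2,
      finrank_fin_fun]
    omega
  have hcodim := finrank_le_finrank_iInf_comap_add_sum_finrank_quotient
    (fun τ : B => balancingMap (K := ℝ) (P := fun σ => σ ∈ Δ ∧ σ.card = k + 1) p τ.1)
    fun τ => Submodule.span ℝ (p '' ↑τ.1)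
  rw [← hWk1_eq] at hcodim
  simp only [hquot, Finset.sum_const, Finset.card_univ, smul_eq_mul, finrank_pi] at hcodim
  have hWk_le : finrank ℝ Wk ≤ Fintype.card B := (Submodule.finrank_le Wk).trans_eq (finrank_pi ℝ)
  rw [Fintype.card_subtype_mem_and, Fintype.card_subtype_mem_and] at hcodim
  rw [Fintype.card_subtype_mem_and] at hWk_le
  linarith

/-- **The Grünbaum–Kalai–Sarkaria bound from monotonicity of Minkowski weight
spaces.**  Let `Δ` be a finite simplicial complex with vertices positioned in
`ℝ^{2k+1}` (`k ≥ 2`) so that the vertices of every `(k-1)`-face are linearly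
independent.  Let `Wk1` be the space of Minkowski weights on `k`-faces and
`Wk` the space of Minkowski weights on `(k-1)`-faces.  If
`dim Wk1 ≤ dim Wk`, then `f_k(Δ) ≤ (k+2) · f_{k-1}(Δ)`. -/
theorem gks_bound_from_weight_monotonicity
    (k : ℕ) (hk : 2 ≤ k)
    (V : Type*) [Fintype V] [DecidableEq V]
    (Δ : Finset (Finset V))
    (hΔ : ∀ σ ∈ Δ, ∀ τ ⊆ σ, τ ∈ Δ)
    (p : V → (Fin (2 * k + 1) → ℝ))
    (hp : ∀ τ ∈ Δ, τ.card = k →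
      LinearIndependent ℝ (fun v : {x // x ∈ τ} => p v))
    (Wk1 : Submodule ℝ ({σ : Finset V // σ ∈ Δ ∧ σ.card = k + 1} → ℝ))
    (hWk1 : ∀ c, c ∈ Wk1 ↔
      ∀ τ ∈ Δ, τ.card = k →
        (∑ σ : {σ : Finset V // σ ∈ Δ ∧ σ.card = k + 1},
            if τ ⊆ σ.1 then ∑ v ∈ σ.1 \ τ, c σ • p v else 0)
          ∈ Submodule.span ℝ (p '' ↑τ))
    (Wk : Submodule ℝ ({σ : Finset V // σ ∈ Δ ∧ σ.card = k} → ℝ))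
    (hWk : ∀ c, c ∈ Wk ↔
      ∀ τ ∈ Δ, τ.card = k - 1 →
        (∑ σ : {σ : Finset V // σ ∈ Δ ∧ σ.card = k},
            if τ ⊆ σ.1 then ∑ v ∈ σ.1 \ τ, c σ • p v else 0)
          ∈ Submodule.span ℝ (p '' ↑τ))
    (hmono : Module.finrank ℝ ↥Wk1 ≤ Module.finrank ℝ ↥Wk) :
    (Δ.filter fun σ => σ.card = k + 1).card
      ≤ (k + 2) * (Δ.filter fun σ => σ.card = k).card :=
  gks_bound_from_weight_monotonicity_general k V Δ p hp Wk1 hWk1 Wk hmono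
end
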